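/- arXiv:2309.15509 — 3 statements merged into one kernel-verified Lean document; each statement's English description precedes it below -/
import Mathlib

section
/- Let I be a type (the set of k-cells), J a type (the set of (k+1)-cells), and [·:·] : J → I → ℤ a function (incidence numbers) such that for each α ∈ I the sums d₊,₂(α) = Σ_β [β:α]², d₊(α) = Σ_β |[β:α]|, and d(α,α',β) = −[β:α]·[β:α'] are well-defined (finitely supported), and let d₋ : I → ℝ with d₋(α) ≥ 1. Fix q ∈ [0,1] and assume d₊(α)·d₋(α) ≥ 1 and q·d₊(α)·d₋(α) + (1−q)·d₊,₂(α) > 0 for all α. Define matrices (in the sense of functions I → I → ℝ acting on finitely supported functions): (B_q)_{α,α'} = q if α = α', and (1−q)/(d₊(α')d₋(α')) · Σ_β d(α,α',β) if α ≠ α'; (Δ)_{α,α'} = d₊,₂(α) if α = α', and −Σ_β d(α,α',β) if α ≠ α'; (M_{1,q})_{α,α} = d₊(α)d₋(α)/(q·d₊(α)d₋(α)+(1−q)·d₊,₂(α)) and (M_{2,q})_{α,α} = (1−q)/(q·d₊(α)d₋(α)+(1−q)·d₊,₂(α)), both diagonal. Then the matrix identity B_q · M_{1,q} = Id − Δ ·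 M_{2,q} holds entrywise. -/
/-! Off the diagonal, the factor `d₊(α') d₋(α')` of `M_{1,q}` cancels the normalisation of
`B_q`, leaving the off-diagonal entry of `Δ · M_{2,q}`. On the diagonal, both sides reduce to
the fact that `q d₊d₋ + (1 - q) d₊,₂` is the common denominator of `M_{1,q}` and `M_{2,q}`. -/

theorem stmt4_general {I J : Type*} [DecidableEq I] (inc : J → I → ℤ)
    (dplus2 dplus dminus : I → ℝ)
    (q : ℝ)
    (hd1 : ∀ α, 1 ≤ dplus α * dminus α)
    (hdenom : ∀ α, 0 < q * (dplus α * dminus α) + (1 - q) * dplus2 α)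
    (Bq Δ : I → I → ℝ) (M1 M2 : I → ℝ)
    (hBq : ∀ α α', Bq α α' = if α = α' then q else
      (1 - q) / (dplus α' * dminus α') * ∑ᶠ β : J, (-(inc β α : ℝ) * (inc β α' : ℝ)))
    (hΔ : ∀ α α', Δ α α' = if α = α' then dplus2 α else
      -∑ᶠ β : J, (-(inc β α : ℝ) * (inc β α' : ℝ)))
    (hM1 : ∀ α, M1 α = dplus α * dminus α / (q * (dplus α * dminus α) + (1 - q) * dplus2 α))
    (hM2 : ∀ α, M2 α = (1 - q) / (q * (dplus α * dminus α) + (1 - q) * dplus2 α)) :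
    ∀ α α', Bq α α' * M1 α' = (if α = α' then 1 else 0) - Δ α α' * M2 α' := by
  intro α α'
  rw [hBq, hΔ, hM1, hM2]
  split_ifs with h
  · subst h
    linear_combination div_self (hdenom α).ne'
  · have hD : dplus α' * dminus α' ≠ 0 := (zero_lt_one.trans_le (hd1 α')).ne'
    rw [mul_right_comm, div_mul_div_cancel₀ hD]
    ring

/-- the matrix identity `B_q · M_{1,q} = Id − Δ · M_{2,q}` (entrywise;
since `M_{1,q}` and `M_{2,q}` are diagonal, the `(α,α')` entry of a product with them
is the `(α,α')` entry of the left factor times the diagonal entry at `α'`). -/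
theorem stmt4 {I J : Type*} [DecidableEq I] (inc : J → I → ℤ)
    (hfin : ∀ α : I, {β : J | inc β α ≠ 0}.Finite)
    (dplus2 dplus dminus : I → ℝ)
    (hdplus2 : ∀ α, dplus2 α = ∑ᶠ β : J, ((inc β α : ℝ)) ^ 2)
    (hdplus : ∀ α, dplus α = ∑ᶠ β : J, |(inc β α : ℝ)|)
    (hdminus : ∀ α, 1 ≤ dminus α)
    (q : ℝ) (hq : q ∈ Set.Icc (0:ℝ) 1)
    (hd1 : ∀ α, 1 ≤ dplus α * dminus α)
    (hdenom : ∀ α, 0 < q * (dplus α * dminus α) + (1 - q) * dplus2 α)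
    (Bq Δ : I → I → ℝ) (M1 M2 : I → ℝ)
    (hBq : ∀ α α', Bq α α' = if α = α' then q else
      (1 - q) / (dplus α' * dminus α') * ∑ᶠ β : J, (-(inc β α : ℝ) * (inc β α' : ℝ)))
    (hΔ : ∀ α α', Δ α α' = if α = α' then dplus2 α else
      -∑ᶠ β : J, (-(inc β α : ℝ) * (inc β α' : ℝ)))
    (hM1 : ∀ α, M1 α = dplus α * dminus α / (q * (dplus α * dminus α) + (1 - q) * dplus2 α))
    (hM2 : ∀ α, M2 α = (1 - q) / (q * (dplus α * dminus α) + (1 - q) * dplus2 α)) :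
    ∀ α α', Bq α α' * M1 α' = (if α = α' then 1 else 0) - Δ α α' * M2 α' :=
  stmt4_general inc dplus2 dplus dminus q hd1 hdenom Bq Δ M1 M2 hBq hΔ hM1 hM2
end

section
/- Let F, F' : ℝ≥0 → [0,∞] be monotonically increasing right-continuous functions that are dilatationally equivalent, i.e., there exist C > 0 and λ₀ > 0 with F'(C⁻¹λ) ≤ F(λ) ≤ F'(Cλ) for all λ ∈ [0, λ₀]. Then F(0) = F'(0), and the Novikov–Shubin invariants agree: liminf_{λ→0⁺} log(F(λ) − F(0))/log(λ) = liminf_{λ→0⁺} log(F'(λ) − F'(0))/log(λ). -/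
open scoped ENNReal Topology
open Filter

/-! The quotient `log (F λ - F 0) / log λ` is antitone in `F` near `0⁺` (there `log λ < 0`), so the
two-sided bound by `F'` squeezes `α(F)` between `α(F' (C⁻¹ ·))` and `α(F' (C ·))`. Rescaling the
argument does not change `α`: `log (C λ) / log λ → 1`, and a liminf in `EReal` is unchanged by a
factor tending to `1`. -/

namespace EReal

variable {α : Type*} {f : Filter α}

lemma liminf_le_liminf_mul_coe_of_tendsto_one (B : α → EReal) {r : α → ℝ}
    (hr : Tendsto r f (𝓝 1)) :
    liminf B f ≤ liminf (fun x => B x * r x) f := by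
  refine le_of_forall_lt fun z hz => ?_
  obtain ⟨c, hzc, hc⟩ := exists_between_coe_real hz
  obtain ⟨c', hcc', hc'⟩ := exists_between_coe_real hc
  have hB : ∀ᶠ x in f, (c' : EReal) < B x := eventually_lt_of_lt_liminf hc'
  have hcr : ∀ᶠ x in f, c < c' * r x :=
    (by simpa using hr.const_mul c' : Tendsto (fun x => c' * r x) f (𝓝 c')).eventually_const_lt
      (by exact_mod_cast hcc')
  have hr0 : ∀ᶠ x in f, 0 < r x := hr.eventually_const_lt one_pos
  refine hzc.trans_le (le_liminf_of_le (by isBoundedDefault) ?_)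
  filter_upwards [hB, hcr, hr0] with x hxB hxc hx0
  calc (c : EReal) ≤ ((c' * r x : ℝ) : EReal) := by exact_mod_cast hxc.le
    _ = c' * r x := coe_mul _ _
    _ ≤ B x * r x := mul_le_mul_of_nonneg_right hxB.le (by exact_mod_cast hx0.le)

lemma liminf_mul_coe_of_tendsto_one (B : α → EReal) {r : α → ℝ} (hr : Tendsto r f (𝓝 1)) :
    liminf (fun x => B x * r x) f = liminf B f := by
  refine le_antisymm ?_ (liminf_le_liminf_mul_coe_of_tendsto_one B hr)
  have hinv : Tendsto (fun x => (r x)⁻¹) f (𝓝 1) := by simpa using hr.inv₀ one_ne_zero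
  refine (liminf_le_liminf_mul_coe_of_tendsto_one _ hinv).trans_eq (liminf_congr ?_)
  filter_upwards [hr.eventually_ne one_ne_zero] with x hx
  rw [mul_assoc, ← coe_mul, mul_inv_cancel₀ hx, coe_one, mul_one]

lemma div_coe_eq_div_coe_mul (a : EReal) {b : ℝ} (c : ℝ) (hb : b ≠ 0) :
    a / c = a / b * ((b / c : ℝ) : EReal) := by
  rw [div_eq_mul_inv, div_eq_mul_inv, ← coe_inv, ← coe_inv, mul_assoc, ← coe_mul]
  congr 2
  field_simp

lemma liminf_div_coe_eq_of_tendsto_div_one (B : α → EReal) {u v : α → ℝ}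
    (hv : ∀ᶠ x in f, v x ≠ 0) (h : Tendsto (fun x => v x / u x) f (𝓝 1)) :
    liminf (fun x => B x / u x) f = liminf (fun x => B x / v x) f := by
  rw [← liminf_mul_coe_of_tendsto_one (fun x => B x / v x) h]
  exact liminf_congr (hv.mono fun x hx => div_coe_eq_div_coe_mul _ _ hx)

end EReal

lemma map_const_mul_nhdsGT_zero {C : ℝ} (hC : 0 < C) : map (C * ·) (𝓝[>] (0 : ℝ)) = 𝓝[>] 0 := by
  conv_lhs => rw [← comap_mulLeft_nhdsGT_zero hC]
  exact map_comap_of_surjective (mul_left_surjective₀ hC.ne') _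

lemma Real.tendsto_log_const_mul_div_log_nhdsGT_zero {C : ℝ} (hC : C ≠ 0) :
    Tendsto (fun x => Real.log (C * x) / Real.log x) (𝓝[>] 0) (𝓝 1) := by
  have hinv : Tendsto (fun x => (Real.log x)⁻¹) (𝓝[>] 0) (𝓝 0) :=
    tendsto_inv_atBot_zero.comp Real.tendsto_log_nhdsGT_zero
  have hlog : ∀ᶠ x in 𝓝[>] (0 : ℝ), Real.log x ≠ 0 :=
    Real.tendsto_log_nhdsGT_zero.eventually_ne_atBot 0
  refine Tendsto.congr' ?_ (by simpa using (hinv.const_mul (Real.log C)).const_add 1)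
  filter_upwards [hlog, self_mem_nhdsWithin] with x hx hx0
  rw [Real.log_mul hC (ne_of_gt hx0)]
  field_simp
  ring

lemma liminf_comp_const_mul_div_log {C : ℝ} (hC : 0 < C) (A : ℝ → EReal) :
    liminf (fun x => A (C * x) / Real.log x) (𝓝[>] 0) =
      liminf (fun x => A x / Real.log x) (𝓝[>] 0) := by
  have hmap := map_const_mul_nhdsGT_zero hC
  have hlog : ∀ᶠ x in 𝓝[>] (0 : ℝ), Real.log (C * x) ≠ 0 :=
    (Real.tendsto_log_nhdsGT_zero.comp hmap.le).eventually_ne_atBot 0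
  rw [EReal.liminf_div_coe_eq_of_tendsto_div_one _ hlog
    (Real.tendsto_log_const_mul_div_log_nhdsGT_zero hC.ne')]
  conv_rhs => rw [← hmap]
  rfl

/-- Where `F λ = F 0` the numerator is `log 0 = ⊥`, so the quotient is `⊤` for `0 < λ < 1`. -/
noncomputable def novikovShubin (F : ℝ → ℝ≥0∞) : EReal :=
  liminf (fun x => ENNReal.log (F x - F 0) / Real.log x) (𝓝[>] 0)

lemma novikovShubin_comp_const_mul (F : ℝ → ℝ≥0∞) {C : ℝ} (hC : 0 < C) :
    novikovShubin (fun x => F (C * x)) = novikovShubin F := by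
  simpa only [novikovShubin, mul_zero] using
    liminf_comp_const_mul_div_log hC fun x => ENNReal.log (F x - F 0)

lemma novikovShubin_le_of_eventually_le {F G : ℝ → ℝ≥0∞} (h0 : F 0 = G 0)
    (h : ∀ᶠ x in 𝓝[>] 0, F x ≤ G x) : novikovShubin G ≤ novikovShubin F := by
  have hlog : ∀ᶠ x in 𝓝[>] (0 : ℝ), Real.log x < 0 :=
    Real.tendsto_log_nhdsGT_zero.eventually_lt_atBot 0
  refine liminf_le_liminf ?_ (by isBoundedDefault) (by isBoundedDefault)
  filter_upwards [h, hlog] with x hx hx0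
  refine EReal.div_le_div_right_of_nonpos (by exact_mod_cast hx0.le) ?_
  rw [h0]
  exact ENNReal.log_monotone (tsub_le_tsub_right hx _)

theorem stmt9_general (F F' : ℝ → ℝ≥0∞)
    (C lam₀ : ℝ) (hC : 0 < C) (hlam₀ : 0 < lam₀)
    (hdil : ∀ lam ∈ Set.Icc (0:ℝ) lam₀, F' (C⁻¹ * lam) ≤ F lam ∧ F lam ≤ F' (C * lam)) :
    F 0 = F' 0 ∧
      Filter.liminf (fun lam : ℝ =>
          (ENNReal.log (F lam - F 0)) / ((Real.log lam : EReal))) (𝓝[>] (0:ℝ)) =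
        Filter.liminf (fun lam : ℝ =>
          (ENNReal.log (F' lam - F' 0)) / ((Real.log lam : EReal))) (𝓝[>] (0:ℝ)) := by
  have hdil₀ := hdil 0 ⟨le_rfl, hlam₀.le⟩
  simp only [mul_zero] at hdil₀
  have h0 : F 0 = F' 0 := le_antisymm hdil₀.2 hdil₀.1
  have hnear : ∀ᶠ x in 𝓝[>] (0 : ℝ), x ∈ Set.Icc 0 lam₀ :=
    mem_of_superset (Ioo_mem_nhdsGT hlam₀) Set.Ioo_subset_Icc_self
  have hlower : novikovShubin F ≤ novikovShubin F' := by
    rw [← novikovShubin_comp_const_mul F' (inv_pos.2 hC)]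
    exact novikovShubin_le_of_eventually_le (by simpa using h0.symm)
      (hnear.mono fun x hx => (hdil x hx).1)
  have hupper : novikovShubin F' ≤ novikovShubin F := by
    rw [← novikovShubin_comp_const_mul F' hC]
    exact novikovShubin_le_of_eventually_le (by simpa using h0)
      (hnear.mono fun x hx => (hdil x hx).2)
  exact ⟨h0, le_antisymm hlower hupper⟩

/-- dilatational equivalence preserves `F(0)` and the Novikov–Shubin invariant. -/
theorem stmt9 (F F' : ℝ → ℝ≥0∞)
    (hFmono : MonotoneOn F (Set.Ici 0)) (hF'mono : MonotoneOn F' (Set.Ici 0))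
    (hFrc : ∀ x ∈ Set.Ici (0:ℝ), ContinuousWithinAt F (Set.Ici x) x)
    (hF'rc : ∀ x ∈ Set.Ici (0:ℝ), ContinuousWithinAt F' (Set.Ici x) x)
    (C lam₀ : ℝ) (hC : 0 < C) (hlam₀ : 0 < lam₀)
    (hdil : ∀ lam ∈ Set.Icc (0:ℝ) lam₀, F' (C⁻¹ * lam) ≤ F lam ∧ F lam ≤ F' (C * lam)) :
    F 0 = F' 0 ∧
      Filter.liminf (fun lam : ℝ =>
          (ENNReal.log (F lam - F 0)) / ((Real.log lam : EReal))) (𝓝[>] (0:ℝ)) =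
        Filter.liminf (fun lam : ℝ =>
          (ENNReal.log (F' lam - F' 0)) / ((Real.log lam : EReal))) (𝓝[>] (0:ℝ)) :=
  stmt9_general F F' C lam₀ hC hlam₀ hdil
end

section
/- Let F : ℝ≥0 → [0,∞) be monotonically increasing with b := F(0), and let p̃ : ℕ → ℝ satisfy, for all λ ∈ (0,1] and n ∈ ℕ, (1−λ)ⁿ · F(√λ) ≤ p̃(n) ≤ (1−λ)ⁿ + F(√λ). If there exist constants C > 0 and a > 0 such that p̃(n) ≥ b + C·n^{−a} for all n ≥ 1, then liminf_{λ→0⁺} log(F(√λ) − b)/log(λ) ≤ a. -/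
/-!
Fix `a < s < t`. For small `λ` take `n = ⌈λ ^ (-s / a)⌉₊`: the lower bound on `p` gives
`p n - b ≥ 2 c λ ^ s`, while `(1 - λ) ^ n ≤ exp (-λ ^ (1 - s / a))` is smaller than any power
of `λ`, so the upper bound on `p` forces `F (√λ) - b ≥ c λ ^ s`. Dividing the logarithm of this
by `log λ < 0` bounds `log (F (√λ) - b) / log λ` by `s + log c / log λ`, which is `< t` near `0`.
-/

open scoped Topology

open Filter Real Set

/-- The hypothesis `0 ≤ a` accounts for the junk value `sSup ∅ = 0`, which the liminf takes
when `f` is not eventually bounded below. -/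
theorem liminf_le_of_forall_gt_eventually_le {α : Type*} {l : Filter α} [l.NeBot] {f : α → ℝ}
    {a : ℝ} (ha : 0 ≤ a) (h : ∀ t > a, ∀ᶠ x in l, f x ≤ t) : liminf f l ≤ a := by
  rw [liminf_eq]
  refine Real.sSup_le (fun c hc => le_of_forall_gt_imp_ge_of_dense fun t ht => ?_) ha
  obtain ⟨x, hcx, hxt⟩ := ((show ∀ᶠ x in l, c ≤ f x from hc).and (h t ht)).exists
  linarith

theorem eventually_log_div_log_le_of_mul_rpow_le {g : ℝ → ℝ} {c s t : ℝ} (hc : 0 < c)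
    (hst : s < t) (h : ∀ᶠ x in 𝓝[>] 0, c * x ^ s ≤ g x) :
    ∀ᶠ x in 𝓝[>] 0, log (g x) / log x ≤ t := by
  have hconst : Tendsto (fun x => log c / log x) (𝓝[>] 0) (𝓝 0) :=
    tendsto_const_nhds.div_atBot tendsto_log_nhdsGT_zero
  filter_upwards [h, hconst.eventually (ge_mem_nhds (sub_pos.2 hst)), Ioo_mem_nhdsGT one_pos]
    with x hcx hsmall ⟨hx0, hx1⟩
  have hlog : log c + s * log x ≤ log (g x) := by
    rw [← log_rpow hx0, ← log_mul hc.ne' (rpow_pos_of_pos hx0 s).ne']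
    exact log_le_log (by positivity) hcx
  have hneg : log x < 0 := log_neg hx0 hx1
  rw [div_le_iff_of_neg hneg] at hsmall ⊢
  linarith

theorem eventually_exp_neg_rpow_neg_le_mul_rpow {r c : ℝ} (hr : 0 < r) (hc : 0 < c) (s : ℝ) :
    ∀ᶠ x in 𝓝[>] 0, exp (-x ^ (-r)) ≤ c * x ^ s := by
  have hdecay : Tendsto (fun x : ℝ => (x ^ (-r)) ^ (s / r) * exp (-1 * x ^ (-r)))
      (𝓝[>] 0) (𝓝 0) :=
    (tendsto_rpow_mul_exp_neg_mul_atTop_nhds_zero (s / r) 1 one_pos).comp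
      (tendsto_rpow_neg_nhdsGT_zero (neg_lt_zero.2 hr))
  filter_upwards [hdecay.eventually (ge_mem_nhds hc), self_mem_nhdsWithin] with x hx hx0
  have hpow : x ^ s = ((x ^ (-r)) ^ (s / r))⁻¹ := by
    rw [← rpow_mul hx0.le, ← rpow_neg hx0.le]
    congr 1
    field_simp
  have hy : 0 < (x ^ (-r)) ^ (s / r) := rpow_pos_of_pos (rpow_pos_of_pos hx0 _) _
  rw [hpow, ← div_eq_mul_inv, le_div_iff₀ hy]
  simpa [mul_comm] using hx

theorem one_sub_pow_le_exp_neg_mul {x : ℝ} (hx : x ≤ 1) (n : ℕ) :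
    (1 - x) ^ n ≤ exp (-(n * x)) := by
  rw [← mul_neg, exp_nat_mul]
  exact pow_le_pow_left₀ (sub_nonneg.2 hx) (one_sub_le_exp_neg x) n

theorem exists_eventually_mul_rpow_le_sub {G : ℝ → ℝ} {p : ℕ → ℝ} {a b C s : ℝ}
    (ha : 0 < a) (hC : 0 < C) (has : a < s)
    (hp : ∀ x ∈ Ioc (0:ℝ) 1, ∀ n : ℕ, p n ≤ (1 - x) ^ n + G x)
    (hlow : ∀ n : ℕ, 1 ≤ n → b + C * (n : ℝ) ^ (-a) ≤ p n) :
    ∃ c > 0, ∀ᶠ x in 𝓝[>] 0, c * x ^ s ≤ G x - b := by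
  set c := C * 2 ^ (-a) / 2
  have hc : 0 < c := by positivity
  refine ⟨c, hc, ?_⟩
  set q := s / a
  have hq : 1 < q := (one_lt_div ha).2 has
  filter_upwards [eventually_exp_neg_rpow_neg_le_mul_rpow (sub_pos.2 hq) hc s,
    Ioc_mem_nhdsGT one_pos] with x hexp ⟨hx0, hx1⟩
  set n := ⌈x ^ (-q)⌉₊
  have hy1 : 1 ≤ x ^ (-q) := one_le_rpow_of_pos_of_le_one_of_nonpos hx0 hx1 (by linarith)
  have hn1 : 1 ≤ n := Nat.one_le_iff_ne_zero.2 (Nat.ceil_pos.2 (by linarith)).ne'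
  have hpoly : 2 * c * x ^ s ≤ C * (n : ℝ) ^ (-a) := by
    have hn : (2 * x ^ (-q)) ^ (-a) ≤ (n : ℝ) ^ (-a) :=
      rpow_le_rpow_of_nonpos (by positivity) (Nat.ceil_le_two_mul (by linarith)) (by linarith)
    rw [mul_rpow zero_le_two (by positivity), ← rpow_mul hx0.le,
      neg_mul_neg, div_mul_cancel₀ s ha.ne'] at hn
    calc 2 * c * x ^ s = C * (2 ^ (-a) * x ^ s) := by ring
      _ ≤ C * (n : ℝ) ^ (-a) := by gcongr
  have hgeom : (1 - x) ^ n ≤ exp (-x ^ (-(q - 1))) := by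
    refine (one_sub_pow_le_exp_neg_mul hx1 n).trans (exp_le_exp.2 (neg_le_neg ?_))
    calc x ^ (-(q - 1)) = x ^ (-q) * x := by
          rw [← rpow_add_one hx0.ne']; ring_nf
      _ ≤ n * x := by gcongr; exact Nat.le_ceil _
  linarith [hp x ⟨hx0, hx1⟩ n, hlow n hn1]

theorem stmt10_general (F : ℝ → ℝ)
    (b : ℝ)
    (p : ℕ → ℝ)
    (hp : ∀ lam ∈ Set.Ioc (0:ℝ) 1, ∀ n : ℕ,
      (1 - lam) ^ n * F (Real.sqrt lam) ≤ p n ∧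
        p n ≤ (1 - lam) ^ n + F (Real.sqrt lam))
    (a : ℝ) (ha : 0 < a)
    (hlow : ∃ C : ℝ, 0 < C ∧ ∀ n : ℕ, 1 ≤ n → b + C * (n : ℝ) ^ (-a : ℝ) ≤ p n) :
    Filter.liminf (fun lam : ℝ =>
        Real.log (F (Real.sqrt lam) - b) / Real.log lam) (𝓝[>] (0:ℝ)) ≤ a := by
  obtain ⟨C, hC, hlow⟩ := hlow
  refine liminf_le_of_forall_gt_eventually_le ha.le fun t hat => ?_
  obtain ⟨c, hc, hbound⟩ := exists_eventually_mul_rpow_le_sub (G := fun x => F (√x))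
    (s := (a + t) / 2) ha hC (by linarith) (fun x hx n => (hp x hx n).2) hlow
  exact eventually_log_div_log_le_of_mul_rpow_le hc (by linarith) hbound

/-- a polynomial lower bound on the return quantity forces an upper
bound on half the Novikov–Shubin invariant. -/
theorem stmt10 (F : ℝ → ℝ) (hFmono : MonotoneOn F (Set.Ici 0))
    (hFnonneg : ∀ lam ∈ Set.Ici (0:ℝ), 0 ≤ F lam)
    (b : ℝ) (hb : b = F 0)
    (p : ℕ → ℝ)
    (hp : ∀ lam ∈ Set.Ioc (0:ℝ) 1, ∀ n : ℕ,
      (1 - lam) ^ n * F (Real.sqrt lam) ≤ p n ∧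
        p n ≤ (1 - lam) ^ n + F (Real.sqrt lam))
    (a : ℝ) (ha : 0 < a)
    (hlow : ∃ C : ℝ, 0 < C ∧ ∀ n : ℕ, 1 ≤ n → b + C * (n : ℝ) ^ (-a : ℝ) ≤ p n) :
    Filter.liminf (fun lam : ℝ =>
        Real.log (F (Real.sqrt lam) - b) / Real.log lam) (𝓝[>] (0:ℝ)) ≤ a :=
  stmt10_general F b p hp a ha hlow
end
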